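/- Let f₁, …, f_N : ℝ^d → ℝ be differentiable with L-Lipschitz gradients and set f = (1/N) Σ_{i=1}^N f_i. Let x ∈ ℝ^d with ∇f(x) ≠ 0, let ρ ≥ 0, γ ≥ 0, α > 0, ε > 0, and let η ∈ ℝ^d satisfy 0 ≤ η_j ≤ 1/ε for every coordinate j. Then ⟨∇f(x), −(γ/N) Σ_{i=1}^N ∇f_i(x + ρ ∇f(x)/‖∇f(x)‖) ⊙ η⟩ ≤ −γ ‖∇f(x) ⊙ √η‖² + (γ/(2α²)) ‖∇f(x) ⊙ √η‖² + γ α² L² ρ²/(2ε). -/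

import Mathlib

/-!
Let `y = x + ρ ∇f(x)/‖∇f(x)‖` and `G = ∇f(y)`. Since `∇f` is the average of the `∇f_i`, the SAM
direction is exactly `γ (G ⊙ η)`, and `∇f` is `L`-Lipschitz, so `‖G - ∇f(x)‖ ≤ L |ρ|`.
Weighting by `√η`, with `u = ∇f(x) ⊙ √η` and `v = (G - ∇f(x)) ⊙ √η` one has
`⟨∇f(x), G ⊙ η⟩ = ‖u‖² + ⟨u, v⟩`; Young's inequality with weight `α` bounds `-⟨u, v⟩`, and
`η ≤ 1/ε` gives `‖v‖² ≤ ‖G - ∇f(x)‖² / ε`.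
-/

open scoped RealInnerProductSpace

/-- The coordinatewise (Hadamard) product on `EuclideanSpace ℝ (Fin d)`. -/
noncomputable def had {d : ℕ} (x y : EuclideanSpace ℝ (Fin d)) : EuclideanSpace ℝ (Fin d) :=
  (WithLp.equiv 2 (Fin d → ℝ)).symm (fun j => x j * y j)

/-- The coordinatewise square root on `EuclideanSpace ℝ (Fin d)`. -/
noncomputable def vsqrt {d : ℕ} (x : EuclideanSpace ℝ (Fin d)) : EuclideanSpace ℝ (Fin d) :=
  (WithLp.equiv 2 (Fin d → ℝ)).symm (fun j => Real.sqrt (x j))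

section Gradient

variable {ι F : Type*} [Fintype ι] [NormedAddCommGroup F] [InnerProductSpace ℝ F]
  [CompleteSpace F]

theorem gradient_const_mul_sum {f : ι → F → ℝ} {z : F} (c : ℝ)
    (hf : ∀ i, DifferentiableAt ℝ (f i) z) :
    gradient (fun y => c * ∑ i, f i y) z = c • ∑ i, gradient (f i) z := by
  have hderiv : HasFDerivAt (fun y => c * ∑ i, f i y) (c • ∑ i, fderiv ℝ (f i) z) z :=
    (HasFDerivAt.fun_sum fun i _ => (hf i).hasFDerivAt).const_mul c
  simp only [gradient, hderiv.fderiv, map_smul, map_sum]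

end Gradient

theorem norm_one_div_smul_sum_le {E : Type*} [SeminormedAddCommGroup E] [NormedSpace ℝ E]
    {N : ℕ} (hN : 1 ≤ N) {w : Fin N → E} {C : ℝ} (hw : ∀ i, ‖w i‖ ≤ C) :
    ‖(1 / (N : ℝ)) • ∑ i, w i‖ ≤ C := by
  have hN' : (0 : ℝ) < N := by exact_mod_cast hN
  calc ‖(1 / (N : ℝ)) • ∑ i, w i‖ ≤ 1 / N * ∑ _i : Fin N, C := by
        rw [norm_smul, Real.norm_of_nonneg (by positivity)]
        gcongr
        exact (norm_sum_le _ _).trans (Finset.sum_le_sum fun i _ => hw i)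
    _ = C := by
        rw [Finset.sum_const, Finset.card_univ, Fintype.card_fin, nsmul_eq_mul]
        field_simp

theorem norm_div_norm_smul_self {E : Type*} [NormedAddCommGroup E] [NormedSpace ℝ E] {x : E}
    (hx : x ≠ 0) (r : ℝ) : ‖(r / ‖x‖) • x‖ = |r| := by
  rw [norm_smul, norm_div, norm_norm, Real.norm_eq_abs,
    div_mul_cancel₀ _ (norm_ne_zero_iff.mpr hx)]

theorem abs_real_inner_le_young {E : Type*} [SeminormedAddCommGroup E] [InnerProductSpace ℝ E]
    (u v : E) {α : ℝ} (hα : α ≠ 0) :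
    |⟪u, v⟫| ≤ ‖u‖ ^ 2 / (2 * α ^ 2) + α ^ 2 * ‖v‖ ^ 2 / 2 :=
  calc |⟪u, v⟫| ≤ ‖u‖ * ‖v‖ := abs_real_inner_le_norm u v
    _ = 2 * (‖u‖ / α) * (α * ‖v‖) / 2 := by field_simp
    _ ≤ ((‖u‖ / α) ^ 2 + (α * ‖v‖) ^ 2) / 2 := by
        gcongr; exact two_mul_le_add_sq _ _
    _ = _ := by field_simp

section Hadamard

variable {d : ℕ}

@[simp] theorem had_apply (x y : EuclideanSpace ℝ (Fin d)) (j : Fin d) :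
    had x y j = x j * y j := rfl

@[simp] theorem vsqrt_apply (x : EuclideanSpace ℝ (Fin d)) (j : Fin d) :
    vsqrt x j = √(x j) := rfl

theorem had_add (x y z : EuclideanSpace ℝ (Fin d)) : had (x + y) z = had x z + had y z := by
  ext j; simp [add_mul]

theorem smul_had (c : ℝ) (x y : EuclideanSpace ℝ (Fin d)) : c • had x y = had (c • x) y := by
  ext j; simp [mul_assoc]

theorem sum_had {ι : Type*} (s : Finset ι) (x : ι → EuclideanSpace ℝ (Fin d))
    (y : EuclideanSpace ℝ (Fin d)) :
    ∑ i ∈ s, had (x i) y = had (∑ i ∈ s, x i) y := by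
  ext j; simp [Finset.sum_mul]

theorem inner_had_eq_inner_had_vsqrt (x y : EuclideanSpace ℝ (Fin d))
    {η : EuclideanSpace ℝ (Fin d)} (hη : ∀ j, 0 ≤ η j) :
    ⟪x, had y η⟫ = ⟪had x (vsqrt η), had y (vsqrt η)⟫ := by
  simp only [PiLp.inner_apply, had_apply, vsqrt_apply, RCLike.inner_apply, conj_trivial]
  refine Finset.sum_congr rfl fun j _ => ?_
  linear_combination -(x j * y j) * Real.mul_self_sqrt (hη j)

theorem norm_had_vsqrt_sq_le (x : EuclideanSpace ℝ (Fin d)) {η : EuclideanSpace ℝ (Fin d)}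
    {c : ℝ} (hη : ∀ j, 0 ≤ η j ∧ η j ≤ c) : ‖had x (vsqrt η)‖ ^ 2 ≤ c * ‖x‖ ^ 2 := by
  simp only [EuclideanSpace.norm_sq_eq, had_apply, vsqrt_apply, Real.norm_eq_abs, sq_abs,
    Finset.mul_sum]
  refine Finset.sum_le_sum fun j _ => ?_
  rw [mul_pow, Real.sq_sqrt (hη j).1, mul_comm c]
  exact mul_le_mul_of_nonneg_left (hη j).2 (sq_nonneg _)

theorem neg_inner_had_le {g G η : EuclideanSpace ℝ (Fin d)} {α c : ℝ} (hα : α ≠ 0)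
    (hη : ∀ j, 0 ≤ η j ∧ η j ≤ c) :
    -⟪g, had G η⟫ ≤ -‖had g (vsqrt η)‖ ^ 2 + ‖had g (vsqrt η)‖ ^ 2 / (2 * α ^ 2)
      + α ^ 2 * (c * ‖G - g‖ ^ 2) / 2 := by
  set u := had g (vsqrt η)
  set v := had (G - g) (vsqrt η)
  have hsplit : ⟪g, had G η⟫ = ‖u‖ ^ 2 + ⟪u, v⟫ := by
    rw [inner_had_eq_inner_had_vsqrt _ _ fun j => (hη j).1, ← add_sub_cancel g G, had_add,
      inner_add_right, real_inner_self_eq_norm_sq]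
  have hyoung := (neg_le_abs ⟪u, v⟫).trans (abs_real_inner_le_young u v hα)
  have hv : α ^ 2 * ‖v‖ ^ 2 / 2 ≤ α ^ 2 * (c * ‖G - g‖ ^ 2) / 2 := by
    gcongr; exact norm_had_vsqrt_sq_le _ hη
  linarith

end Hadamard

theorem sam_descent_inner_bound_general {d N : ℕ} (hN : 1 ≤ N)
    (fi : Fin N → EuclideanSpace ℝ (Fin d) → ℝ)
    (f : EuclideanSpace ℝ (Fin d) → ℝ)
    (hfdef : ∀ y, f y = (1 / (N : ℝ)) * ∑ i, fi i y)
    (L : ℝ)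
    (hfi : ∀ i, Differentiable ℝ (fi i))
    (hfiL : ∀ i, ∀ u v, ‖gradient (fi i) u - gradient (fi i) v‖ ≤ L * ‖u - v‖)
    (x : EuclideanSpace ℝ (Fin d)) (hx : gradient f x ≠ 0)
    (ρ γ α ε : ℝ) (hγ : 0 ≤ γ) (hα : 0 < α) (hε : 0 < ε)
    (η : EuclideanSpace ℝ (Fin d)) (hη : ∀ j, 0 ≤ η j ∧ η j ≤ 1 / ε) :
    ⟪gradient f x,
        -((γ / (N : ℝ)) • ∑ i,
          had (gradient (fi i) (x + (ρ / ‖gradient f x‖) • gradient f x)) η)⟫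
      ≤ -γ * ‖had (gradient f x) (vsqrt η)‖ ^ 2
        + γ / (2 * α ^ 2) * ‖had (gradient f x) (vsqrt η)‖ ^ 2
        + γ * α ^ 2 * L ^ 2 * ρ ^ 2 / (2 * ε) := by
  set y := x + (ρ / ‖gradient f x‖) • gradient f x
  have hgrad (z) : gradient f z = (1 / (N : ℝ)) • ∑ i, gradient (fi i) z := by
    rw [funext hfdef]; exact gradient_const_mul_sum _ fun i => (hfi i).differentiableAt
  have hsam : (γ / (N : ℝ)) • ∑ i, had (gradient (fi i) y) η = γ • had (gradient f y) η := by
    rw [sum_had, smul_had, smul_had, hgrad, smul_smul, mul_one_div]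
  have hlip : ‖gradient f y - gradient f x‖ ≤ L * |ρ| := by
    rw [hgrad y, hgrad x, ← smul_sub, ← Finset.sum_sub_distrib]
    refine norm_one_div_smul_sum_le hN fun i => ?_
    simpa [y, norm_div_norm_smul_self hx] using hfiL i y x
  have hlip_sq : ‖gradient f y - gradient f x‖ ^ 2 ≤ L ^ 2 * ρ ^ 2 := by
    simpa [mul_pow, sq_abs] using pow_le_pow_left₀ (norm_nonneg _) hlip 2
  have hdescent := neg_inner_had_le (g := gradient f x) (G := gradient f y) hα.ne' hη
  rw [hsam, inner_neg_right, real_inner_smul_right, ← mul_neg]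
  calc γ * -⟪gradient f x, had (gradient f y) η⟫
      ≤ γ * (-‖had (gradient f x) (vsqrt η)‖ ^ 2
          + ‖had (gradient f x) (vsqrt η)‖ ^ 2 / (2 * α ^ 2)
          + α ^ 2 * (1 / ε * (L ^ 2 * ρ ^ 2)) / 2) := by
        gcongr
        exact hdescent.trans (by gcongr)
    _ = _ := by field_simp

/-- Full-batch descent estimate for the SAM gradient step: with `f = (1/N) Σ f_i`, `f_i`
having `L`-Lipschitz gradients, and `η` coordinatewise in `[0, 1/ε]`,
`⟨∇f(x), −(γ/N) Σ_i ∇f_i(x + ρ∇f(x)/‖∇f(x)‖) ⊙ η⟩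
  ≤ −γ‖∇f(x) ⊙ √η‖² + (γ/(2α²))‖∇f(x) ⊙ √η‖² + γα²L²ρ²/(2ε)`. -/
theorem sam_descent_inner_bound {d N : ℕ} (hd : 1 ≤ d) (hN : 1 ≤ N)
    (fi : Fin N → EuclideanSpace ℝ (Fin d) → ℝ)
    (f : EuclideanSpace ℝ (Fin d) → ℝ)
    (hfdef : ∀ y, f y = (1 / (N : ℝ)) * ∑ i, fi i y)
    (L : ℝ)
    (hfi : ∀ i, Differentiable ℝ (fi i))
    (hfiL : ∀ i, ∀ u v, ‖gradient (fi i) u - gradient (fi i) v‖ ≤ L * ‖u - v‖)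
    (x : EuclideanSpace ℝ (Fin d)) (hx : gradient f x ≠ 0)
    (ρ γ α ε : ℝ) (hρ : 0 ≤ ρ) (hγ : 0 ≤ γ) (hα : 0 < α) (hε : 0 < ε)
    (η : EuclideanSpace ℝ (Fin d)) (hη : ∀ j, 0 ≤ η j ∧ η j ≤ 1 / ε) :
    ⟪gradient f x,
        -((γ / (N : ℝ)) • ∑ i,
          had (gradient (fi i) (x + (ρ / ‖gradient f x‖) • gradient f x)) η)⟫
      ≤ -γ * ‖had (gradient f x) (vsqrt η)‖ ^ 2
        + γ / (2 * α ^ 2) * ‖had (gradient f x) (vsqrt η)‖ ^ 2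
        + γ * α ^ 2 * L ^ 2 * ρ ^ 2 / (2 * ε) :=
  sam_descent_inner_bound_general hN fi f hfdef L hfi hfiL x hx ρ γ α ε hγ hα hε η hη
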